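/- arXiv:1011.3238 — 5 statements merged into one kernel-verified Lean document; each statement's English description precedes it below -/
import Mathlib

section
/- Let n ≥ 2 and let a ∈ ℝ with a ≠ −n. For every smooth function f : ℝⁿ ∖ {0} → ℂ that is positively homogeneous of degree a, there exist smooth functions σ_1,…,σ_n : ℝⁿ ∖ {0} → ℂ, each positively homogeneous of degree a+1, such that f(ξ) = Σ_{j=1}^n (∂σ_j/∂ξ_j)(ξ) for all ξ ∈ ℝⁿ ∖ {0}. -/
open MeasureTheory Metric

noncomputable section

/-- A function on `ℝⁿ \ {0}` is positively homogeneous of degree `a`. -/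
def PosHomogeneous {n : ℕ} (a : ℝ) (f : EuclideanSpace ℝ (Fin n) → ℂ) : Prop :=
  ∀ l : ℝ, 0 < l → ∀ ξ : EuclideanSpace ℝ (Fin n), ξ ≠ 0 →
    f (l • ξ) = (l ^ a) • f ξ

lemma euler_identity {n : ℕ} {a : ℝ} {f : EuclideanSpace ℝ (Fin n) → ℂ}
    (hf : ContDiffOn ℝ (⊤ : ℕ∞) f {ξ : EuclideanSpace ℝ (Fin n) | ξ ≠ 0})
    (hhom : PosHomogeneous a f) {ξ : EuclideanSpace ℝ (Fin n)} (hξ : ξ ≠ 0) :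
    fderiv ℝ f ξ ξ = (a : ℂ) * f ξ := by
  have hopen : IsOpen {ξ : EuclideanSpace ℝ (Fin n) | ξ ≠ 0} := isOpen_compl_singleton
  have hmem : {ξ : EuclideanSpace ℝ (Fin n) | ξ ≠ 0} ∈ nhds ξ := hopen.mem_nhds hξ
  have hdiff : DifferentiableAt ℝ f ξ :=
    ((hf.contDiffAt hmem).differentiableAt (by simp))
  have h1 : HasFDerivAt f (fderiv ℝ f ξ) ξ := hdiff.hasFDerivAt
  have hsm : HasDerivAt (fun l : ℝ => l • ξ) ξ 1 := by
    simpa using (hasDerivAt_id (1 : ℝ)).smul_const ξ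
  have h2 : HasDerivAt (fun l : ℝ => f (l • ξ)) (fderiv ℝ f ξ ξ) 1 := by
    have h1' : HasFDerivAt f (fderiv ℝ f ξ) ((fun l : ℝ => l • ξ) 1) := by simpa using h1
    simpa [Function.comp_def] using HasFDerivAt.comp_hasDerivAt (1 : ℝ) h1' hsm
  have h3 : HasDerivAt (fun l : ℝ => (l ^ a : ℝ) • f ξ) ((a : ℝ) • f ξ) 1 := by
    have := (Real.hasDerivAt_rpow_const (x := (1:ℝ)) (p := a)
      (Or.inl one_ne_zero)).smul_const (f ξ)
    simpa using this
  have heq : (fun l : ℝ => f (l • ξ)) =ᶠ[nhds (1:ℝ)] fun l : ℝ => (l ^ a : ℝ) • f ξ := by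
    filter_upwards [lt_mem_nhds (show (0:ℝ) < 1 by norm_num)] with l hl
    exact hhom l hl ξ hξ
  have h2' : HasDerivAt (fun l : ℝ => f (l • ξ)) ((a : ℝ) • f ξ) 1 :=
    h3.congr_of_eventuallyEq heq
  have := h2.unique h2'
  rw [this, Complex.real_smul]

/-- every smooth function on `ℝⁿ \ {0}` (n ≥ 2) which is positively
homogeneous of degree `a ≠ -n` is a sum of partial derivatives of smooth functions
which are positively homogeneous of degree `a+1`. -/
theorem stmt_1 (n : ℕ) (hn : 2 ≤ n) (a : ℝ) (ha : a ≠ -(n : ℝ))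
    (f : EuclideanSpace ℝ (Fin n) → ℂ)
    (hf : ContDiffOn ℝ (⊤ : ℕ∞) f {ξ : EuclideanSpace ℝ (Fin n) | ξ ≠ 0})
    (hhom : PosHomogeneous a f) :
    ∃ σ : Fin n → EuclideanSpace ℝ (Fin n) → ℂ,
      (∀ j, ContDiffOn ℝ (⊤ : ℕ∞) (σ j) {ξ : EuclideanSpace ℝ (Fin n) | ξ ≠ 0}) ∧
      (∀ j, PosHomogeneous (a + 1) (σ j)) ∧
      (∀ ξ : EuclideanSpace ℝ (Fin n), ξ ≠ 0 →
        f ξ = ∑ j : Fin n, fderiv ℝ (σ j) ξ (EuclideanSpace.single j 1)) := by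
  have hopen : IsOpen {ξ : EuclideanSpace ℝ (Fin n) | ξ ≠ 0} := isOpen_compl_singleton
  have han : (a + n : ℝ) ≠ 0 := by
    intro h; apply ha; linarith
  have hanC : ((a : ℂ) + n) ≠ 0 := by
    intro h; apply han
    have := congrArg Complex.re h
    simpa using this
  set c : ℂ := ((a : ℂ) + n)⁻¹ with hc
  set σ : Fin n → EuclideanSpace ℝ (Fin n) → ℂ :=
    fun j ξ => c * (((ξ j : ℝ) : ℂ) * f ξ) with hσ
  have hproj : ∀ j : Fin n, ContDiff ℝ (⊤ : ℕ∞) (fun ξ : EuclideanSpace ℝ (Fin n) => ((ξ j : ℝ) : ℂ)) :=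
    fun j => (Complex.ofRealCLM.comp
      (EuclideanSpace.proj j : EuclideanSpace ℝ (Fin n) →L[ℝ] ℝ)).contDiff
  refine ⟨σ, ?_, ?_, ?_⟩
  · intro j
    exact ContDiffOn.const_smul c (((hproj j).contDiffOn).mul hf) |>.congr
      (fun x _ => by simp [hσ, smul_eq_mul])
  · intro j l hl ξ hξ
    have hls : (l • ξ) j = l * ξ j := rfl
    have hla : (0:ℝ) < l := hl
    simp only [hσ, hls, hhom l hl ξ hξ, Complex.real_smul]
    push_cast
    rw [Real.rpow_add hla, Real.rpow_one]
    push_cast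
    ring
  · intro ξ hξ
    have hmem : {ξ : EuclideanSpace ℝ (Fin n) | ξ ≠ 0} ∈ nhds ξ := hopen.mem_nhds hξ
    have hdiff : DifferentiableAt ℝ f ξ := (hf.contDiffAt hmem).differentiableAt (by simp)
    set F := fderiv ℝ f ξ with hF
    have h1 : HasFDerivAt f F ξ := hdiff.hasFDerivAt
    set G : Fin n → (EuclideanSpace ℝ (Fin n) →L[ℝ] ℂ) :=
      fun j => Complex.ofRealCLM.comp (EuclideanSpace.proj j) with hG
    have hg : ∀ j, HasFDerivAt (fun ξ : EuclideanSpace ℝ (Fin n) => ((ξ j : ℝ) : ℂ)) (G j) ξ :=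
      fun j => (Complex.ofRealCLM.comp (EuclideanSpace.proj j)).hasFDerivAt
    have hσd : ∀ j, HasFDerivAt (σ j)
        (c • (((ξ j : ℝ) : ℂ) • F + f ξ • G j)) ξ := by
      intro j
      exact ((hg j).mul h1).const_mul c
    have hfd : ∀ j, fderiv ℝ (σ j) ξ = c • (((ξ j : ℝ) : ℂ) • F + f ξ • G j) :=
      fun j => (hσd j).fderiv
    have hGe : ∀ j : Fin n, G j (EuclideanSpace.single j 1) = 1 := by
      intro j
      simp [hG, PiLp.proj_apply, EuclideanSpace.single_apply]
    have hsum : ∑ j : Fin n, ((ξ j : ℝ) : ℂ) * F (EuclideanSpace.single j 1)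
        = (a : ℂ) * f ξ := by
      have hrepr : ξ = ∑ j : Fin n, ξ j • EuclideanSpace.single j 1 := by
        have := (EuclideanSpace.basisFun (Fin n) ℝ).sum_repr ξ
        simpa [EuclideanSpace.basisFun_apply, EuclideanSpace.basisFun_repr] using this.symm
      have : F ξ = ∑ j : Fin n, ξ j • F (EuclideanSpace.single j 1) := by
        conv_lhs => rw [hrepr]
        rw [map_sum]
        simp
      rw [← euler_identity hf hhom hξ, ← hF, this]
      simp [Complex.real_smul]
    have hterm : ∀ j : Fin n, fderiv ℝ (σ j) ξ (EuclideanSpace.single j 1)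
        = c * (((ξ j : ℝ) : ℂ) * F (EuclideanSpace.single j 1) + f ξ) := by
      intro j
      rw [hfd j]
      simp only [ContinuousLinearMap.smul_apply, ContinuousLinearMap.add_apply, hGe j,
        smul_eq_mul, mul_one]
    calc f ξ = c * (((a:ℂ) * f ξ) + (n : ℂ) * f ξ) := by
          rw [hc]; field_simp
      _ = ∑ j : Fin n, fderiv ℝ (σ j) ξ (EuclideanSpace.single j 1) := by
          simp only [hterm]
          rw [← Finset.mul_sum, Finset.sum_add_distrib, hsum, Finset.sum_const]
          simp [nsmul_eq_mul]
end
end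

section
/- Let n ≥ 2, k ∈ ℕ, and a ∈ ℝ with a ≠ −n. Let f : ℝⁿ ∖ {0} → ℂ be log-polyhomogeneous of degree (a,k), i.e. f(ξ) = Σ_{i=0}^k f_i(ξ) (log|ξ|)^i with each f_i smooth and positively homogeneous of degree a. Then there exist functions σ_1,…,σ_n : ℝⁿ ∖ {0} → ℂ, each log-polyhomogeneous of degree (a+1,k), i.e. σ_j(ξ) = Σ_{i=0}^k σ_{j,i}(ξ) (log|ξ|)^i with each σ_{j,i} smooth and positively homogeneous of degree a+1, such that f = Σ_{j=1}^n ∂σ_j/∂ξ_j on ℝⁿ ∖ {0}. -/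
open MeasureTheory Metric

noncomputable section

/-- A function on `ℝⁿ \ {0}` is log-polyhomogeneous of degree `(a, k)`:
it can be written `f(ξ) = Σ_{i=0}^k fᵢ(ξ) (log |ξ|)^i` with each `fᵢ` smooth away
from `0` and positively homogeneous of degree `a`. -/
def LogPolyHomogeneous {n : ℕ} (a : ℝ) (k : ℕ)
    (f : EuclideanSpace ℝ (Fin n) → ℂ) : Prop :=
  ∃ g : ℕ → EuclideanSpace ℝ (Fin n) → ℂ,
    (∀ i, ContDiffOn ℝ (⊤ : ℕ∞) (g i) {ξ : EuclideanSpace ℝ (Fin n) | ξ ≠ 0}) ∧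
    (∀ i, PosHomogeneous a (g i)) ∧
    (∀ ξ : EuclideanSpace ℝ (Fin n), ξ ≠ 0 →
      f ξ = ∑ i ∈ Finset.range (k + 1), g i ξ * (Real.log ‖ξ‖ : ℂ) ^ i)

/-- a log-polyhomogeneous function of degree `(a, k)` on `ℝⁿ \ {0}`
(n ≥ 2, a ≠ -n) is a sum of partial derivatives of log-polyhomogeneous functions
of degree `(a+1, k)`. -/
theorem stmt_6 (n : ℕ) (hn : 2 ≤ n) (k : ℕ) (a : ℝ) (ha : a ≠ -(n : ℝ))
    (f : EuclideanSpace ℝ (Fin n) → ℂ)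
    (hf : LogPolyHomogeneous a k f) :
    ∃ σ : Fin n → EuclideanSpace ℝ (Fin n) → ℂ,
      (∀ j, LogPolyHomogeneous (a + 1) k (σ j)) ∧
      (∀ ξ : EuclideanSpace ℝ (Fin n), ξ ≠ 0 →
        f ξ = ∑ j : Fin n, fderiv ℝ (σ j) ξ (EuclideanSpace.single j 1)) := by
  obtain ⟨g, hgsm, hghom, hgrep⟩ := hf
  set c : ℂ := (n : ℂ) + (a : ℂ) with hc
  have hcne : c ≠ 0 := by
    intro h
    apply ha
    have : (a : ℂ) = -(n : ℂ) := by linear_combination h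
    exact_mod_cast this
  -- coefficients
  set d : ℕ → ℕ → ℂ := fun i m =>
    (-1) ^ (m - i) * ((m.factorial : ℂ) / (i.factorial : ℂ)) * (c⁻¹) ^ (m - i + 1) with hd
  -- the pieces G i of the primitive
  set G : ℕ → EuclideanSpace ℝ (Fin n) → ℂ := fun i ξ =>
    ∑ m ∈ Finset.Ico i (k + 1), d i m * g m ξ with hG
  have hGsm : ∀ i, ContDiffOn ℝ (⊤ : ℕ∞) (G i) {ξ : EuclideanSpace ℝ (Fin n) | ξ ≠ 0} := by
    intro i
    exact ContDiffOn.sum fun m _ => (contDiffOn_const).mul (hgsm m)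
  have hGhom : ∀ i, PosHomogeneous a (G i) := by
    intro i l hl ξ hξ
    simp only [hG, Finset.smul_sum]
    refine Finset.sum_congr rfl fun m _ => ?_
    rw [hghom m l hl ξ hξ, Complex.real_smul, Complex.real_smul]
    ring
  have hGtop : ∀ ξ, G (k + 1) ξ = 0 := by
    intro ξ; simp [hG]
  -- the key recurrence
  have hrec : ∀ i ≤ k, ∀ ξ : EuclideanSpace ℝ (Fin n),
      c * G i ξ + ((i : ℂ) + 1) * G (i + 1) ξ = g i ξ := by
    intro i hi ξ
    have h1 : G i ξ = d i i * g i ξ + ∑ m ∈ Finset.Ico (i + 1) (k + 1), d i m * g m ξ :=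
      Finset.sum_eq_sum_Ico_succ_bot (by omega) _
    have hdii : c * d i i = 1 := by
      have hif : (i.factorial : ℂ) ≠ 0 := Nat.cast_ne_zero.mpr (Nat.factorial_ne_zero i)
      simp only [hd, Nat.sub_self, pow_zero, zero_add, pow_one, one_mul, div_self hif]
      exact mul_inv_cancel₀ hcne
    have hcancel : ∀ m ∈ Finset.Ico (i + 1) (k + 1),
        c * (d i m * g m ξ) + ((i : ℂ) + 1) * (d (i + 1) m * g m ξ) = 0 := by
      intro m hm
      rw [Finset.mem_Ico] at hm
      obtain ⟨s, hs⟩ : ∃ s, m = i + 1 + s := ⟨m - (i + 1), by omega⟩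
      subst hs
      have e1 : i + 1 + s - i = s + 1 := by omega
      have e2 : i + 1 + s - (i + 1) = s := by omega
      have h1 : (i.factorial : ℂ) ≠ 0 := Nat.cast_ne_zero.mpr (Nat.factorial_ne_zero i)
      have h2 : ((i : ℂ) + 1) ≠ 0 := Nat.cast_add_one_ne_zero i
      simp only [hd, e1, e2, Nat.factorial_succ i]
      push_cast
      field_simp
      have hc1 : c * c⁻¹ = 1 := mul_inv_cancel₀ hcne
      linear_combination (-(((i + 1 + s).factorial : ℂ) * g (i + 1 + s) ξ * c⁻¹ ^ s * (-1) ^ s * c⁻¹)) * hc1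
    have h2 : G (i + 1) ξ = ∑ m ∈ Finset.Ico (i + 1) (k + 1), d (i + 1) m * g m ξ := rfl
    rw [h1, h2, mul_add, ← mul_assoc, hdii, one_mul, Finset.mul_sum, Finset.mul_sum,
      add_assoc, ← Finset.sum_add_distrib]
    rw [Finset.sum_congr rfl hcancel, Finset.sum_const_zero, add_zero]
  -- total primitive density
  set Gt : EuclideanSpace ℝ (Fin n) → ℂ := fun ξ =>
    ∑ i ∈ Finset.range (k + 1), G i ξ * (Real.log ‖ξ‖ : ℂ) ^ i with hGt
  -- the candidate σ
  refine ⟨fun j ξ => ((ξ j : ℝ) : ℂ) * Gt ξ, ?_, ?_⟩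
  · -- log-polyhomogeneity of σ j
    intro j
    refine ⟨fun i ξ => ((ξ j : ℝ) : ℂ) * G i ξ, ?_, ?_, ?_⟩
    · intro i
      refine ContDiffOn.mul ?_ (hGsm i)
      exact (Complex.ofRealCLM.comp (EuclideanSpace.proj (𝕜 := ℝ) j)).contDiff.contDiffOn
    · intro i l hl ξ hξ
      have h1 : (l • ξ) j = l * ξ j := rfl
      have h2 : G i (l • ξ) = (l ^ a) • G i ξ := hGhom i l hl ξ hξ
      simp only [h1, h2, Complex.real_smul]
      push_cast
      rw [Real.rpow_add hl, Real.rpow_one]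
      push_cast
      ring
    · intro ξ hξ
      simp only [hGt, Finset.mul_sum, mul_assoc]
  · -- the derivative identity
    intro ξ hξ
    have hξs : ξ ∈ {ξ : EuclideanSpace ℝ (Fin n) | ξ ≠ 0} := hξ
    have hopen : IsOpen {ξ : EuclideanSpace ℝ (Fin n) | ξ ≠ 0} := isOpen_ne
    have hnorm : (0 : ℝ) < ‖ξ‖ := norm_pos_iff.mpr hξ
    set L : ℂ := (Real.log ‖ξ‖ : ℂ) with hL
    -- differentiability of G i at ξ
    have hGdiff : ∀ i, DifferentiableAt ℝ (G i) ξ := fun i =>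
      ((hGsm i).differentiableOn (by simp)).differentiableAt (hopen.mem_nhds hξs)
    -- differentiability of log ‖·‖ at ξ
    have hlogd : DifferentiableAt ℝ (fun η : EuclideanSpace ℝ (Fin n) =>
        ((Real.log ‖η‖ : ℝ) : ℂ)) ξ := by
      apply Complex.ofRealCLM.differentiable.differentiableAt.comp
      exact (Real.differentiableAt_log hnorm.ne').comp ξ
        ((contDiffAt_norm ℝ hξ).differentiableAt (by norm_num : (1 : WithTop ℕ∞) ≠ 0))
    have hGtdiff : DifferentiableAt ℝ Gt ξ := by
      apply DifferentiableAt.fun_sum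
      intro i _
      exact (hGdiff i).mul (hlogd.pow i)
    -- Euler-type identity for Gt
    have heuler : fderiv ℝ Gt ξ ξ =
        ∑ i ∈ Finset.range (k + 1),
          ((a : ℂ) * G i ξ * L ^ i + G i ξ * ((i : ℂ) * L ^ (i - 1))) := by
      have hmap : HasDerivAt (fun l : ℝ => l • ξ) ξ 1 := by
        simpa using (hasDerivAt_id (1 : ℝ)).smul_const ξ
      have hcomp : HasDerivAt (Gt ∘ fun l : ℝ => l • ξ) (fderiv ℝ Gt ξ ξ) 1 := by
        have h' : HasFDerivAt Gt (fderiv ℝ Gt ξ) ((1 : ℝ) • ξ) := by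
          rw [one_smul]; exact hGtdiff.hasFDerivAt
        simpa using h'.comp_hasDerivAt 1 hmap
      -- explicit formula for the composition near 1
      have hψ : HasDerivAt (fun l : ℝ =>
          ∑ i ∈ Finset.range (k + 1),
            ((l ^ a : ℝ) : ℂ) * G i ξ * (((Real.log l : ℝ) : ℂ) + L) ^ i)
          (∑ i ∈ Finset.range (k + 1),
            ((a : ℂ) * G i ξ * L ^ i + G i ξ * ((i : ℂ) * L ^ (i - 1)))) 1 := by
        apply HasDerivAt.fun_sum
        intro i _
        have hu : HasDerivAt (fun l : ℝ => ((l ^ a : ℝ) : ℂ)) ((a : ℂ)) 1 := by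
          have := (Real.hasDerivAt_rpow_const (x := 1) (p := a) (Or.inl one_ne_zero))
          simpa using this.ofReal_comp
        have hw : HasDerivAt (fun l : ℝ => (((Real.log l : ℝ) : ℂ) + L)) (1 : ℂ) 1 := by
          have h1 : HasDerivAt Real.log (1 : ℝ) 1 := by
            simpa using Real.hasDerivAt_log one_ne_zero
          simpa using (h1.ofReal_comp).add_const L
        have hwp : HasDerivAt (fun l : ℝ => (((Real.log l : ℝ) : ℂ) + L) ^ i)
            ((i : ℂ) * L ^ (i - 1)) 1 := by
          have hp := hasDerivAt_pow i ((((Real.log (1:ℝ) : ℝ) : ℂ)) + L)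
          have h2 := hp.scomp (1 : ℝ) hw
          simpa [Function.comp_def, Real.log_one] using h2
        have := (hu.mul_const (G i ξ)).mul hwp
        simp only [Real.log_one, Complex.ofReal_zero, zero_add, Real.one_rpow,
          Complex.ofReal_one, one_mul] at this
        exact this
      have heq : (fun l : ℝ =>
          ∑ i ∈ Finset.range (k + 1),
            ((l ^ a : ℝ) : ℂ) * G i ξ * (((Real.log l : ℝ) : ℂ) + L) ^ i)
          =ᶠ[nhds 1] (Gt ∘ fun l : ℝ => l • ξ) := by
        filter_upwards [IsOpen.mem_nhds isOpen_Ioi (by norm_num : (1:ℝ) ∈ Set.Ioi 0)]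
          with l hl
        have hl' : (0 : ℝ) < l := hl
        have hlx : l • ξ ≠ 0 := smul_ne_zero hl'.ne' hξ
        simp only [Function.comp, hGt]
        refine Finset.sum_congr rfl fun i _ => ?_
        rw [hGhom i l hl' ξ hξ, norm_smul, Real.norm_eq_abs, abs_of_pos hl',
          Real.log_mul hl'.ne' hnorm.ne', Complex.real_smul]
        push_cast
        ring
      have := hψ.congr_of_eventuallyEq heq.symm
      exact (this.unique hcomp).symm
    -- derivative of each σ j
    have hσd : ∀ j : Fin n, HasFDerivAt (fun ξ => ((ξ j : ℝ) : ℂ) * Gt ξ)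
        (((ξ j : ℝ) : ℂ) • (fderiv ℝ Gt ξ) +
          Gt ξ • (Complex.ofRealCLM.comp (EuclideanSpace.proj (𝕜 := ℝ) j))) ξ := by
      intro j
      exact ((Complex.ofRealCLM.comp
        (EuclideanSpace.proj (𝕜 := ℝ) j)).hasFDerivAt).mul hGtdiff.hasFDerivAt
    -- compute the sum
    have hsum : ∀ j : Fin n, fderiv ℝ (fun ξ => ((ξ j : ℝ) : ℂ) * Gt ξ) ξ
        (EuclideanSpace.single j 1)
        = ((ξ j : ℝ) : ℂ) * (fderiv ℝ Gt ξ (EuclideanSpace.single j 1)) + Gt ξ := by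
      intro j
      rw [(hσd j).fderiv]
      simp [EuclideanSpace.single_apply, Complex.real_smul]
    rw [Finset.sum_congr rfl fun j _ => hsum j]
    rw [Finset.sum_add_distrib, Finset.sum_const, Finset.card_univ, Fintype.card_fin]
    have hrepr : (ξ : EuclideanSpace ℝ (Fin n)) =
        ∑ j : Fin n, (ξ j : ℝ) • EuclideanSpace.single j (1 : ℝ) := by
      ext i
      rw [WithLp.ofLp_sum, Finset.sum_apply]
      simp [EuclideanSpace.single_apply]
    have hlin : ∑ j : Fin n, ((ξ j : ℝ) : ℂ) *
        (fderiv ℝ Gt ξ (EuclideanSpace.single j 1)) = fderiv ℝ Gt ξ ξ := by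
      calc ∑ j : Fin n, ((ξ j : ℝ) : ℂ) * (fderiv ℝ Gt ξ (EuclideanSpace.single j 1))
          = ∑ j : Fin n, fderiv ℝ Gt ξ ((ξ j : ℝ) • EuclideanSpace.single j (1 : ℝ)) := by
            refine Finset.sum_congr rfl fun j _ => ?_
            rw [(fderiv ℝ Gt ξ).map_smul]
            exact (Complex.real_smul).symm
        _ = fderiv ℝ Gt ξ (∑ j : Fin n, (ξ j : ℝ) • EuclideanSpace.single j (1 : ℝ)) :=
            (map_sum _ _ _).symm
        _ = fderiv ℝ Gt ξ ξ := by rw [← hrepr]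
    rw [hlin, heuler, hgrep ξ hξ, nsmul_eq_mul]
    have hnG : (n : ℂ) * Gt ξ = ∑ i ∈ Finset.range (k + 1), (n : ℂ) * (G i ξ * L ^ i) := by
      simp only [hGt, Finset.mul_sum, hL]
    have hshift : ∑ i ∈ Finset.range (k + 1), G i ξ * ((i : ℂ) * L ^ (i - 1))
        = ∑ i ∈ Finset.range (k + 1), ((i : ℂ) + 1) * G (i + 1) ξ * L ^ i := by
      rw [Finset.sum_range_succ' (fun i => G i ξ * ((i : ℂ) * L ^ (i - 1))) k,
        Finset.sum_range_succ (fun i => ((i : ℂ) + 1) * G (i + 1) ξ * L ^ i) k]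
      simp only [hGtop, Nat.cast_zero, zero_mul, mul_zero, add_zero, Nat.add_sub_cancel]
      refine Finset.sum_congr rfl fun i _ => ?_
      push_cast
      ring
    have hterm : ∀ i ∈ Finset.range (k + 1), g i ξ * L ^ i =
        (a : ℂ) * G i ξ * L ^ i + ((i : ℂ) + 1) * G (i + 1) ξ * L ^ i
          + (n : ℂ) * (G i ξ * L ^ i) := by
      intro i hi
      have hik : i ≤ k := by
        have := Finset.mem_range.mp hi; omega
      have h := hrec i hik ξ
      rw [hc] at h
      linear_combination (-(L ^ i)) * h
    calc ∑ i ∈ Finset.range (k + 1), g i ξ * (Real.log ‖ξ‖ : ℂ) ^ i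
        = ∑ i ∈ Finset.range (k + 1),
            ((a : ℂ) * G i ξ * L ^ i + ((i : ℂ) + 1) * G (i + 1) ξ * L ^ i
              + (n : ℂ) * (G i ξ * L ^ i)) := Finset.sum_congr rfl hterm
      _ = (∑ i ∈ Finset.range (k + 1),
            ((a : ℂ) * G i ξ * L ^ i + ((i : ℂ) + 1) * G (i + 1) ξ * L ^ i))
          + ∑ i ∈ Finset.range (k + 1), (n : ℂ) * (G i ξ * L ^ i) :=
            Finset.sum_add_distrib
      _ = (∑ i ∈ Finset.range (k + 1),
            ((a : ℂ) * G i ξ * L ^ i + G i ξ * ((i : ℂ) * L ^ (i - 1))))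
          + (n : ℂ) * Gt ξ := by
            rw [hnG, Finset.sum_add_distrib, Finset.sum_add_distrib, hshift]
end
end

section
/- Let n ≥ 2 and write points of ℝ^{2n} as (x,y) with x,y ∈ ℝⁿ; for smooth functions f,g on an open subset of ℝ^{2n} ∖ {0} define the Poisson bracket {f,g} := Σ_{i=1}^n ( (∂f/∂x_i)(∂g/∂y_i) − (∂f/∂y_i)(∂g/∂x_i) ). Let p, q ∈ ℝ with p + q − 2 ≠ −2n, and let h : ℝ^{2n} ∖ {0} → ℝ be smooth and positively homogeneous of degree p+q−2. Then there exist a finite N and smooth functions f_1,…,f_N (each positively homogeneous of degree p) and g_1,…,g_N (each positively homogeneous of degree q) on ℝ^{2n} ∖ {0} such that h = Σ_{j=1}^N {f_j, g_j}. -/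
open MeasureTheory Metric

noncomputable section

/-- A real-valued function on `ℝ²ⁿ \ {0}` is positively homogeneous of degree `a`.
Here `ℝ²ⁿ` is modelled as `EuclideanSpace ℝ (Fin n ⊕ Fin n)`, a point `(x, y)`
having coordinates `x i = v (Sum.inl i)` and `y i = v (Sum.inr i)`. -/
def PosHomogeneousR {n : ℕ} (a : ℝ)
    (f : EuclideanSpace ℝ (Fin n ⊕ Fin n) → ℝ) : Prop :=
  ∀ l : ℝ, 0 < l → ∀ v : EuclideanSpace ℝ (Fin n ⊕ Fin n), v ≠ 0 →
    f (l • v) = (l ^ a) • f v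

/-- The Poisson bracket `{f,g} = Σᵢ (∂f/∂xᵢ ∂g/∂yᵢ - ∂f/∂yᵢ ∂g/∂xᵢ)` on
`ℝ²ⁿ = EuclideanSpace ℝ (Fin n ⊕ Fin n)`, evaluated at a point `v`. -/
def poissonBracket {n : ℕ} (f g : EuclideanSpace ℝ (Fin n ⊕ Fin n) → ℝ)
    (v : EuclideanSpace ℝ (Fin n ⊕ Fin n)) : ℝ :=
  ∑ i : Fin n,
    (fderiv ℝ f v (EuclideanSpace.single (Sum.inl i) 1) *
        fderiv ℝ g v (EuclideanSpace.single (Sum.inr i) 1) -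
      fderiv ℝ f v (EuclideanSpace.single (Sum.inr i) 1) *
        fderiv ℝ g v (EuclideanSpace.single (Sum.inl i) 1))

namespace Stmt10Aux

variable {n : ℕ}

local notation "EE" => EuclideanSpace ℝ (Fin n ⊕ Fin n)

/-- sign: +1 on `inl`, -1 on `inr`. -/
def sg : Fin n ⊕ Fin n → ℝ := Sum.elim (fun _ => 1) (fun _ => -1)

/-- swap the two `Fin n` factors. -/
def sw : Fin n ⊕ Fin n → Fin n ⊕ Fin n := Sum.elim Sum.inr Sum.inl

lemma sum_single (v : EE) :
    ∑ k : Fin n ⊕ Fin n, (v k) • EuclideanSpace.single k (1:ℝ) = v := by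
  ext j
  rw [show (∑ k : Fin n ⊕ Fin n, (v k) • EuclideanSpace.single k (1:ℝ)) j
      = (EuclideanSpace.proj (𝕜 := ℝ) j)
        (∑ k : Fin n ⊕ Fin n, (v k) • EuclideanSpace.single k (1:ℝ)) from rfl,
    map_sum]
  simp [EuclideanSpace.single_apply]

lemma clm_eval (a : EE →L[ℝ] ℝ) (v : EE) :
    a v = ∑ k : Fin n ⊕ Fin n, v k * a (EuclideanSpace.single k 1) := by
  conv_lhs => rw [← sum_single v]
  rw [map_sum]
  simp [smul_eq_mul]

/-- Euler's identity for positively homogeneous functions. -/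
lemma euler {a : ℝ} {f : EE → ℝ} (hf : PosHomogeneousR a f) {v : EE} (hv : v ≠ 0)
    (hd : DifferentiableAt ℝ f v) : fderiv ℝ f v v = a * f v := by
  have hline : HasDerivAt (fun t : ℝ => t • v) v 1 := by
    simpa using (hasDerivAt_id (1:ℝ)).smul_const v
  have hd' : HasFDerivAt f (fderiv ℝ f v) ((1:ℝ) • v) := by
    rw [one_smul]; exact hd.hasFDerivAt
  have h1 : HasDerivAt (fun t : ℝ => f (t • v)) (fderiv ℝ f v v) 1 := by
    exact hd'.comp_hasDerivAt 1 hline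
  have h2 : HasDerivAt (fun t : ℝ => t ^ a * f v) (a * f v) 1 := by
    have := (Real.hasDerivAt_rpow_const (x := (1:ℝ)) (p := a)
      (Or.inl one_ne_zero)).mul_const (f v)
    simpa using this
  have heq : (fun t : ℝ => f (t • v)) =ᶠ[nhds (1:ℝ)] fun t => t ^ a * f v := by
    filter_upwards [lt_mem_nhds (zero_lt_one)] with t ht
    rw [hf t ht v hv, smul_eq_mul]
  exact h1.unique (h2.congr_of_eventuallyEq heq)

/-- The key Poisson-bracket computation. -/
lemma key (φ ψ : EE → ℝ) (v : EE) (a b : EE →L[ℝ] ℝ)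
    (hφ : HasFDerivAt φ a v) (hψ : HasFDerivAt ψ b v) :
    ∑ s : Fin n ⊕ Fin n,
      poissonBracket (fun w => w s * φ w) (fun w => sg s * (w (sw s) * ψ w)) v
    = 2 * n * (φ v * ψ v) + ψ v * a v + φ v * b v := by
  have hF : ∀ s : Fin n ⊕ Fin n, fderiv ℝ (fun w : EE => w s * φ w) v
      = v s • a + φ v • (EuclideanSpace.proj (𝕜 := ℝ) s) :=
    fun s => ((EuclideanSpace.proj (𝕜 := ℝ) s).hasFDerivAt.mul hφ).fderiv
  have hG : ∀ s : Fin n ⊕ Fin n, fderiv ℝ (fun w : EE => sg s * (w (sw s) * ψ w)) v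
      = sg s • (v (sw s) • b + ψ v • (EuclideanSpace.proj (𝕜 := ℝ) (sw s))) :=
    fun s => (((EuclideanSpace.proj (𝕜 := ℝ) (sw s)).hasFDerivAt.mul hψ).const_mul
      (sg s)).fderiv
  have hFe : ∀ s j : Fin n ⊕ Fin n,
      fderiv ℝ (fun w : EE => w s * φ w) v (EuclideanSpace.single j 1)
      = v s * a (EuclideanSpace.single j 1) + φ v * (if s = j then 1 else 0) := by
    intro s j
    rw [hF s, ContinuousLinearMap.add_apply]
    simp only [ContinuousLinearMap.coe_smul', Pi.smul_apply, smul_eq_mul]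
    rw [show (EuclideanSpace.proj (𝕜 := ℝ) s) (EuclideanSpace.single j (1:ℝ))
        = (EuclideanSpace.single j (1:ℝ)) s from rfl, EuclideanSpace.single_apply]
  have hGe : ∀ s j : Fin n ⊕ Fin n,
      fderiv ℝ (fun w : EE => sg s * (w (sw s) * ψ w)) v (EuclideanSpace.single j 1)
      = sg s * (v (sw s) * b (EuclideanSpace.single j 1)
          + ψ v * (if sw s = j then 1 else 0)) := by
    intro s j
    rw [hG s]
    simp only [ContinuousLinearMap.coe_smul', Pi.smul_apply, smul_eq_mul,
      ContinuousLinearMap.add_apply]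
    rw [show (EuclideanSpace.proj (𝕜 := ℝ) (sw s)) (EuclideanSpace.single j (1:ℝ))
        = (EuclideanSpace.single j (1:ℝ)) (sw s) from rfl, EuclideanSpace.single_apply]
  set ea : (Fin n ⊕ Fin n) → ℝ := fun k => a (EuclideanSpace.single k 1) with hea
  set eb : (Fin n ⊕ Fin n) → ℝ := fun k => b (EuclideanSpace.single k 1) with heb
  set C : ℝ := ∑ i : Fin n,
      (ea (Sum.inl i) * eb (Sum.inr i) - ea (Sum.inr i) * eb (Sum.inl i)) with hC
  have hpb1 : ∀ t : Fin n,
      poissonBracket (fun w : EE => w (Sum.inl t) * φ w)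
        (fun w : EE => sg (Sum.inl t) * (w (sw (Sum.inl t)) * ψ w)) v
      = φ v * ψ v + ψ v * (v (Sum.inl t) * ea (Sum.inl t))
        + φ v * (v (Sum.inr t) * eb (Sum.inr t))
        + (v (Sum.inl t) * v (Sum.inr t)) * C := by
    intro t
    unfold poissonBracket
    have hterm : ∀ i ∈ (Finset.univ : Finset (Fin n)),
        (fderiv ℝ (fun w : EE => w (Sum.inl t) * φ w) v
            (EuclideanSpace.single (Sum.inl i) 1) *
          fderiv ℝ (fun w : EE => sg (Sum.inl t) * (w (sw (Sum.inl t)) * ψ w)) v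
            (EuclideanSpace.single (Sum.inr i) 1) -
        fderiv ℝ (fun w : EE => w (Sum.inl t) * φ w) v
            (EuclideanSpace.single (Sum.inr i) 1) *
          fderiv ℝ (fun w : EE => sg (Sum.inl t) * (w (sw (Sum.inl t)) * ψ w)) v
            (EuclideanSpace.single (Sum.inl i) 1))
        = (if t = i then φ v * ψ v + ψ v * (v (Sum.inl t) * ea (Sum.inl i))
              + φ v * (v (Sum.inr t) * eb (Sum.inr i)) else 0)
          + (v (Sum.inl t) * v (Sum.inr t)) *
            (ea (Sum.inl i) * eb (Sum.inr i) - ea (Sum.inr i) * eb (Sum.inl i)) := by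
      intro i _
      rw [hFe, hFe, hGe, hGe]
      simp only [sg, sw, Sum.elim_inl, one_mul, Sum.inl.injEq, Sum.inr.injEq,
        reduceCtorEq, if_false, ← hea, ← heb]
      by_cases hti : t = i
      · subst hti; simp only [eq_self_iff_true, ite_true]; ring
      · simp only [if_neg hti]; ring
    rw [Finset.sum_congr rfl hterm, Finset.sum_add_distrib,
      Finset.sum_ite_eq Finset.univ t _, if_pos (Finset.mem_univ t),
      ← Finset.mul_sum, ← hC]
  have hpb2 : ∀ t : Fin n,
      poissonBracket (fun w : EE => w (Sum.inr t) * φ w)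
        (fun w : EE => sg (Sum.inr t) * (w (sw (Sum.inr t)) * ψ w)) v
      = φ v * ψ v + ψ v * (v (Sum.inr t) * ea (Sum.inr t))
        + φ v * (v (Sum.inl t) * eb (Sum.inl t))
        - (v (Sum.inl t) * v (Sum.inr t)) * C := by
    intro t
    unfold poissonBracket
    have hterm : ∀ i ∈ (Finset.univ : Finset (Fin n)),
        (fderiv ℝ (fun w : EE => w (Sum.inr t) * φ w) v
            (EuclideanSpace.single (Sum.inl i) 1) *
          fderiv ℝ (fun w : EE => sg (Sum.inr t) * (w (sw (Sum.inr t)) * ψ w)) v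
            (EuclideanSpace.single (Sum.inr i) 1) -
        fderiv ℝ (fun w : EE => w (Sum.inr t) * φ w) v
            (EuclideanSpace.single (Sum.inr i) 1) *
          fderiv ℝ (fun w : EE => sg (Sum.inr t) * (w (sw (Sum.inr t)) * ψ w)) v
            (EuclideanSpace.single (Sum.inl i) 1))
        = (if t = i then φ v * ψ v + ψ v * (v (Sum.inr t) * ea (Sum.inr i))
              + φ v * (v (Sum.inl t) * eb (Sum.inl i)) else 0)
          - (v (Sum.inl t) * v (Sum.inr t)) *
            (ea (Sum.inl i) * eb (Sum.inr i) - ea (Sum.inr i) * eb (Sum.inl i)) := by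
      intro i _
      rw [hFe, hFe, hGe, hGe]
      simp only [sg, sw, Sum.elim_inr, neg_mul, one_mul, Sum.inl.injEq, Sum.inr.injEq,
        reduceCtorEq, if_false, ← hea, ← heb]
      by_cases hti : t = i
      · subst hti; simp only [eq_self_iff_true, ite_true]; ring
      · simp only [if_neg hti]; ring
    rw [Finset.sum_congr rfl hterm, Finset.sum_sub_distrib,
      Finset.sum_ite_eq Finset.univ t _, if_pos (Finset.mem_univ t),
      ← Finset.mul_sum, ← hC]
  rw [Fintype.sum_sum_type,
    Finset.sum_congr rfl (fun t _ => hpb1 t),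
    Finset.sum_congr rfl (fun t _ => hpb2 t)]
  have hav : a v = (∑ t : Fin n, v (Sum.inl t) * ea (Sum.inl t))
      + (∑ t : Fin n, v (Sum.inr t) * ea (Sum.inr t)) := by
    rw [clm_eval a v, Fintype.sum_sum_type]
  have hbv : b v = (∑ t : Fin n, v (Sum.inl t) * eb (Sum.inl t))
      + (∑ t : Fin n, v (Sum.inr t) * eb (Sum.inr t)) := by
    rw [clm_eval b v, Fintype.sum_sum_type]
  simp only [Finset.sum_add_distrib, Finset.sum_sub_distrib, ← Finset.mul_sum,
    Finset.sum_const, Finset.card_univ, Fintype.card_fin, nsmul_eq_mul]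
  rw [hav, hbv]
  ring

lemma normsq_smul (l : ℝ) (v : EE) : ‖l • v‖^2 = l^2 * ‖v‖^2 := by
  rw [norm_smul, mul_pow]
  simp [sq_abs]

lemma pow_hom (r : ℝ) : PosHomogeneousR (2*r) (fun w : EE => (‖w‖^2) ^ r) := by
  intro l hl v hv
  simp only [smul_eq_mul]
  rw [normsq_smul, Real.mul_rpow (sq_nonneg l) (sq_nonneg _)]
  congr 1
  rw [← Real.rpow_natCast l 2, ← Real.rpow_mul hl.le]
  norm_num

lemma hom_mul {a b : ℝ} {f g : EE → ℝ} (hf : PosHomogeneousR a f)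
    (hg : PosHomogeneousR b g) : PosHomogeneousR (a+b) (fun w => f w * g w) := by
  intro l hl v hv
  simp only [hf l hl v hv, hg l hl v hv, smul_eq_mul, Real.rpow_add hl]
  ring

lemma hom_const_mul {a : ℝ} {f : EE → ℝ} (hf : PosHomogeneousR a f) (d : ℝ) :
    PosHomogeneousR a (fun w => d * f w) := by
  intro l hl v hv
  simp only [hf l hl v hv, smul_eq_mul]
  ring

lemma coord_hom (s : Fin n ⊕ Fin n) : PosHomogeneousR 1 (fun w : EE => w s) := by
  intro l hl v hv
  simp [PiLp.smul_apply, smul_eq_mul, Real.rpow_one]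

lemma congr_deg {a b : ℝ} {f : EE → ℝ} (hf : PosHomogeneousR a f) (hab : a = b) :
    PosHomogeneousR b f := hab ▸ hf

lemma pow_smooth (r : ℝ) :
    ContDiffOn ℝ (⊤ : ℕ∞) (fun w : EE => (‖w‖^2) ^ r) {v : EE | v ≠ 0} :=
  ContDiffOn.rpow ((contDiff_norm_sq ℝ).contDiffOn) contDiffOn_const
    (fun x hx => pow_ne_zero _ (norm_ne_zero_iff.mpr hx))

end Stmt10Aux

open Stmt10Aux

/-- on the symplectic cone `ℝ²ⁿ \ {0}` (n ≥ 2), every smooth function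
which is positively homogeneous of non-critical degree `p + q - 2 ≠ -2n` is a finite
sum of Poisson brackets `{fⱼ, gⱼ}` with `fⱼ` positively homogeneous of degree `p`
and `gⱼ` positively homogeneous of degree `q`. -/
theorem stmt_10 (n : ℕ) (hn : 2 ≤ n) (p q : ℝ)
    (hpq : p + q - 2 ≠ -(2 * n : ℝ))
    (h : EuclideanSpace ℝ (Fin n ⊕ Fin n) → ℝ)
    (hsmooth : ContDiffOn ℝ (⊤ : ℕ∞) h {v : EuclideanSpace ℝ (Fin n ⊕ Fin n) | v ≠ 0})
    (hhom : PosHomogeneousR (p + q - 2) h) :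
    ∃ (N : ℕ) (f g : Fin N → EuclideanSpace ℝ (Fin n ⊕ Fin n) → ℝ),
      (∀ j, ContDiffOn ℝ (⊤ : ℕ∞) (f j) {v : EuclideanSpace ℝ (Fin n ⊕ Fin n) | v ≠ 0}) ∧
      (∀ j, ContDiffOn ℝ (⊤ : ℕ∞) (g j) {v : EuclideanSpace ℝ (Fin n ⊕ Fin n) | v ≠ 0}) ∧
      (∀ j, PosHomogeneousR p (f j)) ∧
      (∀ j, PosHomogeneousR q (g j)) ∧
      (∀ v : EuclideanSpace ℝ (Fin n ⊕ Fin n), v ≠ 0 →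
        h v = ∑ j : Fin N, poissonBracket (f j) (g j) v) := by
  have hSopen : IsOpen {v : EuclideanSpace ℝ (Fin n ⊕ Fin n) | v ≠ 0} := isOpen_ne
  set c : ℝ := 2*(n:ℝ) + (p + q - 2) with hcdef
  have hc : c ≠ 0 := by
    intro h0
    rw [hcdef] at h0
    exact hpq (by linarith)
  set A : EuclideanSpace ℝ (Fin n ⊕ Fin n) → ℝ :=
    fun w => (‖w‖^2) ^ ((p-1)/2) with hAdef
  set B : EuclideanSpace ℝ (Fin n ⊕ Fin n) → ℝ :=
    fun w => c⁻¹ * (h w * (‖w‖^2) ^ ((1-p)/2)) with hBdef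
  have hAhom : PosHomogeneousR (p-1) A := congr_deg (pow_hom ((p-1)/2)) (by ring)
  have hBhom : PosHomogeneousR (q-1) B := by
    have h1 : PosHomogeneousR ((p+q-2) + 2*((1-p)/2))
        (fun w : EuclideanSpace ℝ (Fin n ⊕ Fin n) => h w * (‖w‖^2) ^ ((1-p)/2)) :=
      hom_mul hhom (pow_hom _)
    exact congr_deg (hom_const_mul h1 c⁻¹) (by ring)
  have hAsm : ContDiffOn ℝ (⊤ : ℕ∞) A {v : EuclideanSpace ℝ (Fin n ⊕ Fin n) | v ≠ 0} :=
    pow_smooth _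
  have hBsm : ContDiffOn ℝ (⊤ : ℕ∞) B {v : EuclideanSpace ℝ (Fin n ⊕ Fin n) | v ≠ 0} :=
    contDiffOn_const.mul (hsmooth.mul (pow_smooth _))
  have hcoord : ∀ s : Fin n ⊕ Fin n,
      ContDiffOn ℝ (⊤ : ℕ∞) (fun w : EuclideanSpace ℝ (Fin n ⊕ Fin n) => w s)
        {v : EuclideanSpace ℝ (Fin n ⊕ Fin n) | v ≠ 0} :=
    fun s => ((EuclideanSpace.proj (𝕜 := ℝ) s).contDiff).contDiffOn
  refine ⟨n+n,
    fun j w => w (finSumFinEquiv.symm j) * A w,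
    fun j w => sg (finSumFinEquiv.symm j) * (w (sw (finSumFinEquiv.symm j)) * B w),
    fun j => (hcoord _).mul hAsm,
    fun j => contDiffOn_const.mul ((hcoord _).mul hBsm),
    fun j => congr_deg (hom_mul (coord_hom _) hAhom) (by ring),
    fun j => congr_deg (hom_const_mul (hom_mul (coord_hom _) hBhom) _) (by ring),
    ?_⟩
  intro v hv
  have hAd : DifferentiableAt ℝ A v :=
    (hAsm.contDiffAt (hSopen.mem_nhds hv)).differentiableAt (by simp)
  have hBd : DifferentiableAt ℝ B v :=
    (hBsm.contDiffAt (hSopen.mem_nhds hv)).differentiableAt (by simp)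
  have hkey := key A B v (fderiv ℝ A v) (fderiv ℝ B v) hAd.hasFDerivAt hBd.hasFDerivAt
  have hav := euler hAhom hv hAd
  have hbv := euler hBhom hv hBd
  rw [show (∑ j : Fin (n+n), poissonBracket
        (fun w => w (finSumFinEquiv.symm j) * A w)
        (fun w => sg (finSumFinEquiv.symm j) * (w (sw (finSumFinEquiv.symm j)) * B w)) v)
      = ∑ s : Fin n ⊕ Fin n, poissonBracket
        (fun w => w s * A w) (fun w => sg s * (w (sw s) * B w)) v from
    Equiv.sum_comp finSumFinEquiv.symm (fun s => poissonBracket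
      (fun w => w s * A w) (fun w => sg s * (w (sw s) * B w)) v)]
  rw [hkey, hav, hbv]
  have hpos : (0:ℝ) < ‖v‖^2 := pow_pos (norm_pos_iff.mpr hv) 2
  have hAB : A v * B v = c⁻¹ * h v := by
    simp only [hAdef, hBdef]
    have h1 : (‖v‖^2:ℝ)^((p-1)/2) * (‖v‖^2)^((1-p)/2) = 1 := by
      rw [← Real.rpow_add hpos, show ((p-1)/2 + (1-p)/2 : ℝ) = 0 by ring,
        Real.rpow_zero]
    calc (‖v‖^2:ℝ)^((p-1)/2) * (c⁻¹ * (h v * (‖v‖^2) ^ ((1-p)/2)))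
        = c⁻¹ * h v * ((‖v‖^2:ℝ)^((p-1)/2) * (‖v‖^2)^((1-p)/2)) := by ring
      _ = c⁻¹ * h v := by rw [h1, mul_one]
  have e1 : 2*(n:ℝ) * (A v * B v) + B v * ((p-1) * A v) + A v * ((q-1) * B v)
      = c * (A v * B v) := by rw [hcdef]; ring
  rw [e1, hAB, ← mul_assoc, mul_inv_cancel₀ hc, one_mul]
end
end

section
/- Let M be a compact smooth manifold (without boundary), let N ≥ 1, and let e : M → M_N(ℂ) be a smooth map into the N×N complex matrices such that e(x)² = e(x) and e(x) ≠ 0 for every x ∈ M. Then there exist r ∈ ℕ and smooth maps p_1,…,p_r, q_1,…,q_r : M → M_N(ℂ) such that Σ_{j=1}^r p_j(x)·e(x)·q_j(x) = I_N (the identity matrix) for every x ∈ M. -/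
/-!
Over `ℂ` the trace of an idempotent matrix is its rank, so `tr e(x)` never vanishes. For every
square matrix `A` one has `∑ᵢⱼ Eᵢⱼ A Eⱼᵢ = tr A • 1`, so `pᵢⱼ = (tr e)⁻¹ • Eᵢⱼ` and `qᵢⱼ = Eⱼᵢ`
work; they are smooth because `tr e` is smooth and nowhere zero.
-/

open scoped Manifold

namespace Matrix

theorem trace_ne_zero_of_isIdempotentElem {K n : Type*} [Field K] [CharZero K] [Fintype n]
    [DecidableEq n] {A : Matrix n n K} (hA : IsIdempotentElem A) (h0 : A ≠ 0) :
    A.trace ≠ 0 := by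
  have hf : IsIdempotentElem (toLin' A) := hA.map toLinAlgEquiv'
  rw [← trace_toLin'_eq, Ne, LinearMap.IsIdempotentElem.trace_eq_zero_iff hf]
  exact toLin'.map_ne_zero_iff.mpr h0

theorem sum_single_mul_mul_single_self {α n : Type*} [CommSemiring α] [Fintype n] [DecidableEq n]
    (A : Matrix n n α) :
    ∑ i, ∑ j, single i j (1 : α) * A * single j i 1 = A.trace • 1 := by
  have hrow : ∀ i, ∑ j, single i i (A j j) = single i i A.trace := fun i =>
    (map_sum (singleAddMonoidHom i i : α →+ Matrix n n α) (fun j => A j j) Finset.univ).symm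
  simp only [single_mul_mul_single, one_mul, mul_one, hrow]
  rw [smul_one_eq_diagonal, sum_single_eq_diagonal]

end Matrix

theorem stmt_14_general
    {E : Type*} [NormedAddCommGroup E] [NormedSpace ℝ E]
    {H : Type*} [TopologicalSpace H] (I : ModelWithCorners ℝ E H)
    (M : Type*) [TopologicalSpace M] [ChartedSpace H M]
    (N : ℕ)
    (e : M → Matrix (Fin N) (Fin N) ℂ)
    (he_smooth : ∀ i j, ContMDiff I 𝓘(ℝ, ℂ) (⊤ : ℕ∞) (fun x => e x i j))
    (he_idem : ∀ x, e x * e x = e x)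
    (he_ne : ∀ x, e x ≠ 0) :
    ∃ (r : ℕ) (p q : Fin r → M → Matrix (Fin N) (Fin N) ℂ),
      (∀ k i j, ContMDiff I 𝓘(ℝ, ℂ) (⊤ : ℕ∞) (fun x => p k x i j)) ∧
      (∀ k i j, ContMDiff I 𝓘(ℝ, ℂ) (⊤ : ℕ∞) (fun x => q k x i j)) ∧
      (∀ x, ∑ k : Fin r, p k x * e x * q k x = 1) := by
  have htr_ne (x : M) : (e x).trace ≠ 0 :=
    Matrix.trace_ne_zero_of_isIdempotentElem (he_idem x) (he_ne x)
  have htr : ContMDiff I 𝓘(ℝ, ℂ) (⊤ : ℕ∞) fun x => (e x).trace :=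
    ContMDiff.sum fun i _ => he_smooth i i
  have htr_inv : ContMDiff I 𝓘(ℝ, ℂ) (⊤ : ℕ∞) fun x => ((e x).trace)⁻¹ := fun x =>
    (contDiffAt_inv ℝ (htr_ne x)).comp_contMDiffAt (f := fun x => (e x).trace) (htr x)
  let ij : Fin (N * N) ≃ Fin N × Fin N := finProdFinEquiv.symm
  refine ⟨N * N, fun k x => ((e x).trace)⁻¹ • Matrix.single (ij k).1 (ij k).2 1,
    fun k _ => Matrix.single (ij k).2 (ij k).1 1,
    fun _ _ _ => (contDiff_id.mul contDiff_const).comp_contMDiff htr_inv,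
    fun _ _ _ => contMDiff_const, fun x => ?_⟩
  simp only [smul_mul_assoc, ← Finset.smul_sum]
  rw [ij.sum_comp (fun a => Matrix.single a.1 a.2 1 * e x * Matrix.single a.2 a.1 1),
    Fintype.sum_prod_type, Matrix.sum_single_mul_mul_single_self, smul_smul,
    inv_mul_cancel₀ (htr_ne x), one_smul]

/-- if `e` is a smooth family of nonzero idempotent `N×N` complex
matrices parametrized by a compact smooth manifold `M` (smoothness meaning that
every matrix entry is smooth), then there are finitely many smooth matrix-valued
maps `p₁,…,p_r, q₁,…,q_r` with `Σⱼ pⱼ(x)·e(x)·qⱼ(x) = 1` for all `x ∈ M`. -/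
theorem stmt_14
    {E : Type*} [NormedAddCommGroup E] [NormedSpace ℝ E]
    {H : Type*} [TopologicalSpace H] (I : ModelWithCorners ℝ E H)
    (M : Type*) [TopologicalSpace M] [ChartedSpace H M]
    [IsManifold I (⊤ : ℕ∞) M] [CompactSpace M]
    (N : ℕ) (hN : 1 ≤ N)
    (e : M → Matrix (Fin N) (Fin N) ℂ)
    (he_smooth : ∀ i j, ContMDiff I 𝓘(ℝ, ℂ) (⊤ : ℕ∞) (fun x => e x i j))
    (he_idem : ∀ x, e x * e x = e x)
    (he_ne : ∀ x, e x ≠ 0) :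
    ∃ (r : ℕ) (p q : Fin r → M → Matrix (Fin N) (Fin N) ℂ),
      (∀ k i j, ContMDiff I 𝓘(ℝ, ℂ) (⊤ : ℕ∞) (fun x => p k x i j)) ∧
      (∀ k i j, ContMDiff I 𝓘(ℝ, ℂ) (⊤ : ℕ∞) (fun x => q k x i j)) ∧
      (∀ x, ∑ k : Fin r, p k x * e x * q k x = 1) :=
  stmt_14_general I M N e he_smooth he_idem he_ne
end

section
/- Let A be a unital associative ℂ-algebra, let V be an (A,A)-bimodule which is a ℂ-vector space, let e ∈ A be an idempotent (e² = e), and suppose there are elements p_1,…,p_r, q_1,…,q_r ∈ A with Σ_{j=1}^r p_j·e·q_j = 1. Let T : V → ℂ be ℂ-linear and satisfy T((e·a·e)·(e·v·e)) = T((e·v·e)·(e·a·e)) for all a ∈ A and v ∈ V (i.e. T is a hypertrace on the corner e·V·e with respect to the corner algebra e·A·e). Define T̃ : V → ℂ by T̃(v) := Σ_{j=1}^r T(e·q_j·v·p_j·e). Then: (i) T̃ is ℂ-linear and satisfies T̃(a·v) = T̃(v·a) for all a ∈ A, v ∈ V; (ii) T̃(e·v·e) = T(e·v·e) for all v ∈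 V; and (iii) T̃ is the unique ℂ-linear functional on V satisfying (i) and (ii). -/
noncomputable section

/-- let `A` be a unital associative ℂ-algebra and `V` an
`(A,A)`-bimodule which is a ℂ-vector space with compatible scalar actions (the
right action of `A` being encoded as a left action of `Aᵐᵒᵖ`, so that `a·v·b` is
`a • MulOpposite.op b • v`). Let `e ∈ A` be an idempotent with
`Σⱼ pⱼ·e·qⱼ = 1`, and let `T : V → ℂ` be ℂ-linear and a hypertrace on the corner
`e·V·e` with respect to the corner algebra `e·A·e`. Then
`T̃(v) := Σⱼ T(e·qⱼ·v·pⱼ·e)` is the unique ℂ-linear hypertrace on `V`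
extending `T` from the corner. -/
theorem stmt_16 (A : Type*) [Ring A] [Algebra ℂ A]
    (V : Type*) [AddCommGroup V] [Module ℂ V]
    [Module A V] [Module Aᵐᵒᵖ V] [SMulCommClass A Aᵐᵒᵖ V]
    [IsScalarTower ℂ A V] [IsScalarTower ℂ Aᵐᵒᵖ V]
    (e : A) (he : e * e = e)
    (r : ℕ) (p q : Fin r → A) (hpq : ∑ j : Fin r, p j * e * q j = 1)
    (T : V →ₗ[ℂ] ℂ)
    (hT : ∀ (a : A) (v : V),
      T ((e * a * e) • (e • MulOpposite.op e • v)) =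
        T (MulOpposite.op (e * a * e) • (e • MulOpposite.op e • v)))
    (Ttilde : V → ℂ)
    (hTtilde : Ttilde =
      fun v => ∑ j : Fin r, T ((e * q j) • MulOpposite.op (p j * e) • v)) :
    (IsLinearMap ℂ Ttilde ∧
      ∀ (a : A) (v : V), Ttilde (a • v) = Ttilde (MulOpposite.op a • v)) ∧
    (∀ v : V, Ttilde (e • MulOpposite.op e • v) = T (e • MulOpposite.op e • v)) ∧
    (∀ T' : V → ℂ, IsLinearMap ℂ T' →
      (∀ (a : A) (v : V), T' (a • v) = T' (MulOpposite.op a • v)) →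
      (∀ v : V, T' (e • MulOpposite.op e • v) = T (e • MulOpposite.op e • v)) →
      T' = Ttilde) := by
  subst hTtilde
  have sc : ∀ (x : A) (y : Aᵐᵒᵖ) (v : V), y • x • v = x • y • v :=
    fun x y v => (smul_comm x y v).symm
  have hee : ∀ x : A, e * (e * x) = e * x := fun x => by rw [← mul_assoc, he]
  have comb : ∀ (x x' y y' : A) (v : V),
      x • (MulOpposite.op y • (x' • (MulOpposite.op y' • v))) =
        (x * x') • MulOpposite.op (y' * y) • v := by
    intro x x' y y' v
    simp only [MulOpposite.op_mul, mul_smul, sc]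
  have ht' : ∀ (b : A) (w : V),
      T ((e * b * e) • MulOpposite.op e • w) = T (e • MulOpposite.op (e * b * e) • w) := by
    intro b w
    have h := hT b w
    have h1 : (e * b * e) • ((e : A) • MulOpposite.op e • w)
        = (e * b * e) • MulOpposite.op e • w := by
      rw [← mul_smul]
      simp only [mul_assoc, he, hee]
    have h2 : MulOpposite.op (e * b * e) • ((e : A) • MulOpposite.op e • w)
        = (e : A) • MulOpposite.op (e * b * e) • w := by
      rw [sc, ← mul_smul, ← MulOpposite.op_mul]
      simp only [mul_assoc, he, hee]
    rw [h1, h2] at h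
    exact h
  have ht2 : ∀ (b x y : A) (w : V),
      T ((e * b * e * x) • MulOpposite.op (y * e) • w)
        = T ((e * x) • MulOpposite.op (y * e * b * e) • w) := by
    intro b x y w
    have v1 : (e * b * e * x) • MulOpposite.op (y * e) • w
        = (e * b * e) • MulOpposite.op e • (x • MulOpposite.op y • w) := by
      rw [comb]
    have v2 : (e : A) • MulOpposite.op (e * b * e) • (x • MulOpposite.op y • w)
        = (e * x) • MulOpposite.op (y * (e * b * e)) • w := comb _ _ _ _ _
    rw [v1, ht', v2]
    simp only [mul_assoc]
  have hins : ∀ w : V, w = ∑ k : Fin r, (p k * e * q k) • w := by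
    intro w; rw [← Finset.sum_smul, hpq, one_smul]
  refine ⟨⟨?_, ?_⟩, ?_, ?_⟩
  · constructor
    · intro u v
      simp only [smul_add, map_add, Finset.sum_add_distrib]
    · intro c v
      have scC : ∀ (x : A) (w : V), x • c • w = c • x • w := by
        intro x w
        rw [← algebraMap_smul A c w, ← mul_smul, ← Algebra.commutes, mul_smul,
          algebraMap_smul]
      have scC' : ∀ (y : Aᵐᵒᵖ) (w : V), y • c • w = c • y • w := by
        intro y w
        rw [← algebraMap_smul Aᵐᵒᵖ c w, ← mul_smul, ← Algebra.commutes, mul_smul,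
          algebraMap_smul]
      simp only [scC', scC, map_smul, smul_eq_mul, Finset.mul_sum]
  · intro a v
    show (∑ j : Fin r, T ((e * q j) • MulOpposite.op (p j * e) • a • v))
        = ∑ j : Fin r, T ((e * q j) • MulOpposite.op (p j * e) • MulOpposite.op a • v)
    have L : ∀ j, T ((e * q j) • MulOpposite.op (p j * e) • a • v)
        = ∑ k : Fin r, T ((e * q k) • MulOpposite.op (p j * e * (q j * a * p k) * e) • v) := by
      intro j
      conv_lhs => rw [hins v]
      simp only [Finset.smul_sum, map_sum]
      refine Finset.sum_congr rfl fun k _ => ?_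
      simp only [sc, smul_smul]
      have h2 := ht2 (q j * a * p k) (q k) (p j) v
      simpa only [mul_assoc] using h2
    have R : ∀ k, T ((e * q k) • MulOpposite.op (p k * e) • MulOpposite.op a • v)
        = ∑ j : Fin r, T ((e * q k) • MulOpposite.op (p j * e * (q j * a * p k) * e) • v) := by
      intro k
      have h1 : MulOpposite.op (p k * e) • (MulOpposite.op a • v)
          = MulOpposite.op (a * (p k * e)) • v := by
        rw [← mul_smul, MulOpposite.op_mul a (p k * e)]
      rw [h1]
      have h2 : (a * (p k * e)) = ∑ j : Fin r, (p j * e * q j) * (a * (p k * e)) := by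
        rw [← Finset.sum_mul, hpq, one_mul]
      rw [h2, Finset.op_sum, Finset.sum_smul, Finset.smul_sum, map_sum]
      refine Finset.sum_congr rfl fun j _ => ?_
      simp only [mul_assoc]
    calc (∑ j : Fin r, T ((e * q j) • MulOpposite.op (p j * e) • a • v))
        = ∑ j : Fin r, ∑ k : Fin r,
            T ((e * q k) • MulOpposite.op (p j * e * (q j * a * p k) * e) • v) :=
          Finset.sum_congr rfl fun j _ => L j
      _ = ∑ k : Fin r, ∑ j : Fin r,
            T ((e * q k) • MulOpposite.op (p j * e * (q j * a * p k) * e) • v) :=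
          Finset.sum_comm
      _ = ∑ k : Fin r, T ((e * q k) • MulOpposite.op (p k * e) • MulOpposite.op a • v) :=
          Finset.sum_congr rfl fun k _ => (R k).symm
  · intro v
    show (∑ j : Fin r, T ((e * q j) • MulOpposite.op (p j * e) • (e • MulOpposite.op e • v)))
        = T (e • MulOpposite.op e • v)
    have hterm : ∀ j, T ((e * q j) • MulOpposite.op (p j * e) • ((e : A) • MulOpposite.op e • v))
        = T ((e : A) • MulOpposite.op (e * p j * e * q j * e) • v) := by
      intro j
      have hvec : (e * q j) • MulOpposite.op (p j * e) • ((e : A) • MulOpposite.op e • v)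
          = (e * q j * e) • MulOpposite.op (e * p j * e) • v := by
        rw [comb]
        simp only [mul_assoc]
      rw [hvec]
      have h := ht2 (q j) 1 (e * p j) v
      simpa only [mul_one] using h
    simp only [hterm]
    rw [← map_sum]
    congr 1
    rw [← Finset.smul_sum]
    congr 1
    rw [← Finset.sum_smul, ← Finset.op_sum]
    congr 2
    calc (∑ j : Fin r, e * p j * e * q j * e) = e * (∑ j : Fin r, p j * e * q j) * e := by
          rw [Finset.mul_sum, Finset.sum_mul]
          exact Finset.sum_congr rfl fun j _ => by simp only [mul_assoc]
      _ = e := by rw [hpq, mul_one, he]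
  · intro T' hlin htr hext
    funext v
    have key : ∀ u : V, T' ((e : A) • u) = T ((e : A) • MulOpposite.op e • u) := by
      intro u
      have h0 : (e : A) • u = e • ((e : A) • u) := by rw [← mul_smul, he]
      rw [h0, htr, sc, hext]
    have hsum : T' ((∑ j : Fin r, p j * e * q j) • v)
        = ∑ j : Fin r, T' ((p j * e * q j) • v) := by
      rw [Finset.sum_smul]
      exact map_sum (IsLinearMap.mk' T' hlin) _ _
    calc T' v = T' ((1 : A) • v) := by rw [one_smul]
      _ = ∑ j : Fin r, T' ((p j * e * q j) • v) := by rw [← hpq]; exact hsum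
      _ = ∑ j : Fin r, T ((e * q j) • MulOpposite.op (p j * e) • v) :=
          Finset.sum_congr rfl fun j _ => by
            rw [mul_smul, mul_smul, htr, sc, sc, key, comb]
      _ = (fun v => ∑ j : Fin r, T ((e * q j) • MulOpposite.op (p j * e) • v)) v := rfl
end
end
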